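/- Let ε ∈ (0,1) and δ > 0 and c > 0 be real constants. Consider the Erdős–Rényi random graph G on vertex set Fin n, given by independent Bernoulli(p) indicator random variables for each unordered pair of distinct vertices, with p = c·(ln n)/n^{1-ε}. Fix a vertex x. Then for all sufficiently large n, with probability at least 1 - 1/n^3, for every integer i ≥ 1 the graph-distance sphere Γ_i(x) = {y : dist_G(x,y) = i} satisfies |Γ_i(x)| ≤ (1+δ)·(np)^i, and the ball N_i(x) = {y : dist_G(x,y) ≤ i} satisfies |N_i(x)| ≤ (1+2δ)·(np)^i. -/

import Mathlib

open MeasureTheory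

/-- The Erdős–Rényi random graph on `Fin n` determined by a family of edge indicators
`ω : Sym2 (Fin n) → Bool`: distinct vertices `u, v` are adjacent iff `ω s(u, v) = true`. -/
def erdosRenyiGraph (n : ℕ) (ω : Sym2 (Fin n) → Bool) : SimpleGraph (Fin n) where
  Adj u v := u ≠ v ∧ ω s(u, v) = true
  symm := by
    refine ⟨fun u v h => ?_⟩
    exact ⟨h.1.symm, by rw [Sym2.eq_swap]; exact h.2⟩
  loopless := by
    refine ⟨fun u h => ?_⟩
    exact h.1 rfl

/-!
Write `r = np`. A vertex at distance `i + 1` from `x` has a neighbour at distance `i`, so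
`|Γ_{i+1}|` is at most the number of edges leaving `Γ_i`. By a Chernoff bound and a union bound
over all vertex sets `S`, with probability at least `1 - n⁻³` every `S` has at most `(1 + d) r |S|`
edges leaving it, whence `|Γ_i| ≤ ((1 + d) r) ^ i`. With `K ≥ 1/ε` and `d` so small that
`(1 + d) ^ K ≤ 1 + δ` this settles `i ≤ K`; for `i > K` the trivial bound
`|Γ_i| ≤ n ≤ (n ^ ε) ^ K ≤ r ^ K ≤ r ^ i` suffices. Since `r ≥ (1 + 2δ)/δ`, summing the
sphere bounds `(1 + δ) r ^ j` over `j ≤ i` gives at most `(1 + 2δ) r ^ i` for the ball.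
-/

set_option linter.deprecated false

open ProbabilityTheory Finset Real Topology
open scoped NNReal

section Chernoff

variable {ι : Type*} [Fintype ι] (q : ℝ≥0) (hq : q ≤ 1)

lemma mgf_pi_bernoulli_coord (e : ι) (t : ℝ) :
    mgf (fun ω : ι → Bool => if ω e then (1 : ℝ) else 0)
      (Measure.pi fun _ : ι => (PMF.bernoulli q hq).toMeasure) t = 1 + q * (exp t - 1) := by
  simp only [mgf]
  rw [integral_comp_eval (μ := fun _ : ι => (PMF.bernoulli q hq).toMeasure) (i := e)
    (f := fun b : Bool => exp (t * if b = true then (1 : ℝ) else 0)) (by fun_prop),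
    PMF.integral_eq_sum, Fintype.sum_bool]
  simp [PMF.bernoulli_apply, ENNReal.toReal_sub_of_le (ENNReal.coe_le_one_iff.2 hq)]
  ring

lemma mgf_card_filter_pi_bernoulli_le (F : Finset ι) {t : ℝ} (ht : 0 ≤ t) :
    mgf (fun ω : ι → Bool => (#{e ∈ F | ω e} : ℝ))
      (Measure.pi fun _ : ι => (PMF.bernoulli q hq).toMeasure) t ≤ exp (#F * q * (exp t - 1)) := by
  have hindep : iIndepFun (fun e (ω : ι → Bool) => if ω e then (1 : ℝ) else 0)
      (Measure.pi fun _ : ι => (PMF.bernoulli q hq).toMeasure) :=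
    iIndepFun_pi (X := fun _ (b : Bool) => if b = true then (1 : ℝ) else 0) fun _ => by fun_prop
  have hsum : (fun ω : ι → Bool => (#{e ∈ F | ω e} : ℝ))
      = ∑ e ∈ F, fun ω : ι → Bool => if ω e then (1 : ℝ) else 0 := by
    ext ω
    simp [Finset.sum_apply]
  rw [hsum, hindep.mgf_sum (fun _ => by fun_prop) F]
  simp only [mgf_pi_bernoulli_coord, prod_const]
  calc (1 + q * (exp t - 1)) ^ #F ≤ exp (q * (exp t - 1)) ^ #F := by
        have : 0 ≤ exp t - 1 := by linarith [add_one_le_exp t, ht]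
        gcongr
        linarith [add_one_le_exp (q * (exp t - 1))]
    _ = exp (#F * q * (exp t - 1)) := by rw [← exp_nat_mul]; ring_nf

theorem measureReal_card_filter_ge_le_exp (F : Finset ι) {d ν : ℝ} (hd0 : 0 ≤ d) (hd2 : d ≤ 2)
    (hν : #F * (q : ℝ) ≤ ν) :
    (Measure.pi fun _ : ι => (PMF.bernoulli q hq).toMeasure).real
        {ω | (1 + d) * ν ≤ #{e ∈ F | ω e}} ≤ exp (-(d ^ 2 * ν / 4)) := by
  have hexp : exp (d / 2) - 1 ≤ d / 2 + (d / 2) ^ 2 := by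
    have := abs_exp_sub_one_sub_id_le (x := d / 2) (by rw [abs_le]; constructor <;> linarith)
    linarith [le_abs_self (exp (d / 2) - 1 - d / 2)]
  have hν0 : 0 ≤ ν := le_trans (by positivity) hν
  -- At `t = d / 2` the exponent is at most `ν (t + t²) - t (1 + d) ν = -d²ν/4`.
  calc _ ≤ exp (-(d / 2) * ((1 + d) * ν)) * mgf (fun ω : ι → Bool => (#{e ∈ F | ω e} : ℝ))
          (Measure.pi fun _ : ι => (PMF.bernoulli q hq).toMeasure) (d / 2) :=
        measure_ge_le_exp_mul_mgf _ (by positivity) Integrable.of_finite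
    _ ≤ exp (-(d / 2) * ((1 + d) * ν)) * exp (ν * (exp (d / 2) - 1)) := by
        gcongr
        refine (mgf_card_filter_pi_bernoulli_le q hq F (by positivity)).trans (exp_le_exp.2 ?_)
        have : 0 ≤ exp (d / 2) - 1 := by linarith [add_one_le_exp (d / 2)]
        gcongr
    _ ≤ exp (-(d ^ 2 * ν / 4)) := by
        rw [← exp_add, exp_le_exp]
        nlinarith [mul_le_mul_of_nonneg_left hexp hν0]

end Chernoff

lemma sum_inv_pow_card_add_four_le {V : Type*} [Fintype V] (hV : 3 ≤ Fintype.card V) :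
    ∑ S : Finset V, ((Fintype.card V : ℝ) ^ (#S + 4))⁻¹ ≤ ((Fintype.card V : ℝ) ^ 3)⁻¹ := by
  set n := Fintype.card V
  have hn : (3 : ℝ) ≤ n := by exact_mod_cast hV
  have hbinom : ∑ S : Finset V, ((n : ℝ)⁻¹) ^ #S = (1 + (n : ℝ)⁻¹) ^ n := by
    simpa [add_comm] using Fintype.sum_pow_mul_eq_add_pow V ((n : ℝ)⁻¹) 1
  have hexp : (1 + (n : ℝ)⁻¹) ^ n ≤ 3 :=
    calc (1 + (n : ℝ)⁻¹) ^ n ≤ exp ((n : ℝ)⁻¹) ^ n := by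
          gcongr; linarith [add_one_le_exp (n : ℝ)⁻¹]
      _ = exp 1 := by rw [← exp_nat_mul, mul_inv_cancel₀ (by positivity)]
      _ ≤ 3 := by linarith [exp_one_lt_d9]
  calc ∑ S : Finset V, ((n : ℝ) ^ (#S + 4))⁻¹ = (1 + (n : ℝ)⁻¹) ^ n * ((n : ℝ) ^ 4)⁻¹ := by
        simp only [pow_add, mul_inv, ← sum_mul, ← inv_pow, hbinom]
    _ ≤ 3 * ((n : ℝ) ^ 4)⁻¹ := by gcongr
    _ ≤ ((n : ℝ) ^ 3)⁻¹ := by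
        have : 3 * (n : ℝ)⁻¹ ≤ 1 := by
          rw [← div_eq_mul_inv, div_le_one (by positivity)]; exact hn
        rw [pow_succ, mul_inv, ← mul_assoc, mul_comm 3, mul_assoc]
        exact mul_le_of_le_one_right (by positivity) this

section CrossingPairs

variable {V : Type*} [DecidableEq V] [Fintype V]

def crossingPairs (S : Finset V) : Finset (Sym2 V) :=
  (S ×ˢ Sᶜ).image fun ab => s(ab.1, ab.2)

lemma mem_crossingPairs {S : Finset V} {e : Sym2 V} :
    e ∈ crossingPairs S ↔ ∃ a ∈ S, ∃ b ∉ S, s(a, b) = e := by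
  simp [crossingPairs, and_assoc]

lemma card_crossingPairs_le (S : Finset V) : #(crossingPairs S) ≤ #S * Fintype.card V :=
  card_image_le.trans <| (card_product _ _).trans_le <| Nat.mul_le_mul_left _ (card_le_univ _)

variable (q : ℝ≥0) (hq : q ≤ 1)

lemma measure_card_crossingPairs_gt_le (S : Finset V) {d : ℝ} (hd0 : 0 ≤ d) (hd2 : d ≤ 2)
    (hlog : 20 * log (Fintype.card V) ≤ d ^ 2 * (Fintype.card V * q)) :
    (Measure.pi fun _ : Sym2 V => (PMF.bernoulli q hq).toMeasure)
        {ω | (1 + d) * (Fintype.card V * q * #S) < #{e ∈ crossingPairs S | ω e}}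
      ≤ ENNReal.ofReal ((Fintype.card V : ℝ) ^ (#S + 4))⁻¹ := by
  set n := Fintype.card V
  set μ := Measure.pi fun _ : Sym2 V => (PMF.bernoulli q hq).toMeasure
  obtain rfl | hS := S.eq_empty_or_nonempty
  · simp [crossingPairs]
  have hn : (0 : ℝ) < n := by exact_mod_cast Fintype.card_pos_iff.2 ⟨hS.choose⟩
  have hS1 : (1 : ℝ) ≤ #S := by exact_mod_cast hS.card_pos
  have hlogn : 0 ≤ log n := log_natCast_nonneg n
  have hmean : #(crossingPairs S) * (q : ℝ) ≤ n * q * #S := by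
    have : (#(crossingPairs S) : ℝ) ≤ #S * n := by exact_mod_cast card_crossingPairs_le S
    nlinarith [q.coe_nonneg]
  calc μ {ω | (1 + d) * (n * q * #S) < #{e ∈ crossingPairs S | ω e}}
    _ ≤ μ {ω | (1 + d) * (n * q * #S) ≤ #{e ∈ crossingPairs S | ω e}} :=
        measure_mono <| Set.setOf_subset_setOf.2 fun _ h => h.le
    _ = ENNReal.ofReal (μ.real
          {ω | (1 + d) * (n * q * #S) ≤ #{e ∈ crossingPairs S | ω e}}) :=
        (ENNReal.ofReal_toReal (measure_ne_top _ _)).symm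
    _ ≤ ENNReal.ofReal (exp (-(d ^ 2 * (n * q * #S) / 4))) :=
        ENNReal.ofReal_le_ofReal (measureReal_card_filter_ge_le_exp q hq _ hd0 hd2 hmean)
    _ ≤ ENNReal.ofReal ((n : ℝ) ^ (#S + 4))⁻¹ := by
        -- `d² n q |S| / 4 ≥ 5 |S| log n ≥ (|S| + 4) log n`
        gcongr
        rw [← exp_log (inv_pos.2 (pow_pos hn _)), log_inv, log_pow, exp_le_exp]
        push_cast
        nlinarith

theorem measure_exists_card_crossingPairs_gt_le {d : ℝ} (hd0 : 0 ≤ d) (hd2 : d ≤ 2)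
    (hV : 3 ≤ Fintype.card V)
    (hlog : 20 * log (Fintype.card V) ≤ d ^ 2 * (Fintype.card V * q)) :
    (Measure.pi fun _ : Sym2 V => (PMF.bernoulli q hq).toMeasure)
        {ω | ∃ S : Finset V, (1 + d) * (Fintype.card V * q * #S) < #{e ∈ crossingPairs S | ω e}}
      ≤ 1 / (Fintype.card V : ENNReal) ^ 3 := by
  rw [Set.setOf_exists]
  refine (measure_iUnion_fintype_le _ _).trans ?_
  refine (sum_le_sum fun S _ => measure_card_crossingPairs_gt_le q hq S hd0 hd2 hlog).trans ?_
  rw [← ENNReal.ofReal_sum_of_nonneg fun _ _ => by positivity]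
  refine (ENNReal.ofReal_le_ofReal (sum_inv_pow_card_add_four_le hV)).trans_eq ?_
  rw [one_div, ENNReal.ofReal_inv_of_pos (by positivity), ENNReal.ofReal_pow (by positivity),
    ENNReal.ofReal_natCast]

end CrossingPairs

lemma le_one_add_mul_pow_of_le_of_le {s N r d δ : ℝ} {K i : ℕ} (hr : 1 ≤ r) (hd : 0 ≤ d)
    (hdK : (1 + d) ^ K ≤ 1 + δ) (hNK : N ≤ r ^ K) (hs : s ≤ ((1 + d) * r) ^ i) (hsN : s ≤ N) :
    s ≤ (1 + δ) * r ^ i := by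
  rcases le_or_gt i K with hiK | hKi
  · calc s ≤ (1 + d) ^ i * r ^ i := by rwa [← mul_pow]
      _ ≤ (1 + d) ^ K * r ^ i := by gcongr; linarith
      _ ≤ (1 + δ) * r ^ i := by gcongr
  · have hδ : 1 ≤ 1 + δ := (one_le_pow₀ (by linarith)).trans hdK
    calc s ≤ r ^ K := hsN.trans hNK
      _ ≤ r ^ i := pow_le_pow_right₀ hr hKi.le
      _ ≤ (1 + δ) * r ^ i := le_mul_of_one_le_left (by positivity) hδ

lemma sum_range_succ_le_of_le_geom {a : ℕ → ℝ} {r δ : ℝ} (hδ : 0 ≤ δ)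
    (hrδ : 1 + 2 * δ ≤ δ * r) (ha : ∀ j, a j ≤ (1 + δ) * r ^ j) (i : ℕ) :
    ∑ j ∈ range (i + 1), a j ≤ (1 + 2 * δ) * r ^ i := by
  induction i with
  | zero => simpa using (ha 0).trans (by simp; linarith)
  | succ i ih =>
    have hr : 0 ≤ r := by nlinarith
    rw [sum_range_succ]
    calc _ ≤ (1 + 2 * δ) * r ^ i + (1 + δ) * r ^ (i + 1) := add_le_add ih (ha _)
      _ ≤ (1 + 2 * δ) * r ^ (i + 1) := by
        rw [pow_succ]; nlinarith [pow_nonneg hr i]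

namespace SimpleGraph

variable {V : Type*} (G : SimpleGraph V)

def outerBoundary (S : Finset V) : Set V := {y | y ∉ S ∧ ∃ z ∈ S, G.Adj z y}

lemma exists_adj_edist_eq_of_edist_eq_succ {x y : V} {i : ℕ} (h : G.edist x y = (i + 1 : ℕ)) :
    ∃ z, G.Adj z y ∧ G.edist x z = i := by
  obtain ⟨w, hw⟩ := exists_walk_of_edist_eq_coe h
  have hyx : y ≠ x := by
    rintro rfl
    exact i.succ_ne_zero (by exact_mod_cast h.symm.trans edist_self)
  obtain ⟨z, hzy, w', hw'⟩ := w.reverse.exists_eq_cons_of_ne hyx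
  have hlen : w'.length = i := by simpa [hw] using (congrArg Walk.length hw').symm
  refine ⟨z, hzy.symm, le_antisymm (by simpa [hlen] using edist_le w'.reverse) ?_⟩
  have htri := G.edist_triangle (u := x) (v := z) (w := y)
  rw [h, edist_eq_one_iff_adj.2 hzy.symm, Nat.cast_succ] at htri
  exact (ENat.add_le_add_iff_right ENat.one_ne_top).1 htri

lemma ncard_outerBoundary_le_card {S : Finset V} {T : Finset (Sym2 V)}
    (hT : ∀ a ∈ S, ∀ b ∉ S, G.Adj a b → s(a, b) ∈ T) :
    (G.outerBoundary S).ncard ≤ #T := by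
  choose! f hfS hfadj using fun y (hy : y ∈ G.outerBoundary S) => hy.2
  rw [← Set.ncard_coe_finset T]
  refine Set.ncard_le_ncard_of_injOn (fun y => s(f y, y))
    (fun y hy => hT _ (hfS y hy) _ hy.1 (hfadj y hy)) ?_ T.finite_toSet
  intro y₁ hy₁ y₂ hy₂ h
  rcases Sym2.eq_iff.1 h with ⟨-, h⟩ | ⟨h, -⟩
  · exact h
  · exact absurd (h ▸ hfS y₁ hy₁) hy₂.1

lemma ncard_ball_le_sum_ncard_sphere (x : V) (i : ℕ) :
    ({y | G.edist x y ≤ i} : Set V).ncard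
      ≤ ∑ j ∈ Finset.range (i + 1), ({y | G.edist x y = j} : Set V).ncard := by
  have hball :
      ({y | G.edist x y ≤ i} : Set V) = ⋃ j : Fin (i + 1), {y | G.edist x y = (j : ℕ)} := by
    ext y
    simp only [Set.mem_setOf_eq, Set.mem_iUnion, ENat.le_coe_iff]
    constructor
    · rintro ⟨k, hk, hki⟩
      exact ⟨⟨k, by omega⟩, hk⟩
    · rintro ⟨j, hj⟩
      exact ⟨j, hj, by omega⟩
  rw [hball, ← Fin.sum_univ_eq_sum_range (fun j => ({y | G.edist x y = j} : Set V).ncard)]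
  exact Set.ncard_iUnion_le_of_fintype _

lemma ncard_sphere_le_pow [Finite V] {a : ℝ} (ha : 0 ≤ a)
    (hext : ∀ S : Finset V, ((G.outerBoundary S).ncard : ℝ) ≤ a * #S)
    (x : V) (i : ℕ) : (({y | G.edist x y = i} : Set V).ncard : ℝ) ≤ a ^ i := by
  induction i with
  | zero =>
    have : {y | G.edist x y = (0 : ℕ)} = {x} := by
      ext y
      rw [Set.mem_setOf_eq, Nat.cast_zero, edist_eq_zero_iff, Set.mem_singleton_iff, eq_comm]
    rw [this]
    simp
  | succ i ih =>
    set S := (Set.toFinite {y | G.edist x y = i}).toFinset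
    have hsub : {y | G.edist x y = (i + 1 : ℕ)} ⊆ G.outerBoundary S := by
      intro y hy
      obtain ⟨z, hzy, hz⟩ := G.exists_adj_edist_eq_of_edist_eq_succ hy
      refine ⟨fun hyS => ?_, z, by simpa [S] using hz, hzy⟩
      have : G.edist x y = i := by simpa [S] using hyS
      exact absurd (Nat.cast_injective (this.symm.trans hy)) (by omega)
    calc (({y | G.edist x y = (i + 1 : ℕ)} : Set V).ncard : ℝ)
      _ ≤ (G.outerBoundary S).ncard := by
          exact_mod_cast Set.ncard_le_ncard hsub
      _ ≤ a * ({y | G.edist x y = i} : Set V).ncard := by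
          rw [Set.ncard_eq_toFinset_card {y | G.edist x y = i} (Set.toFinite _)]; exact hext S
      _ ≤ a ^ (i + 1) := by rw [pow_succ']; gcongr

theorem ncard_sphere_le_and_ncard_ball_le [Fintype V] {r d δ : ℝ} {K : ℕ} (hd : 0 ≤ d)
    (hδ : 0 ≤ δ) (hdK : (1 + d) ^ K ≤ 1 + δ) (hrδ : 1 + 2 * δ ≤ δ * r)
    (hrK : (Fintype.card V : ℝ) ≤ r ^ K)
    (hext : ∀ S : Finset V, ((G.outerBoundary S).ncard : ℝ) ≤ (1 + d) * r * #S) (x : V) (i : ℕ) :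
    (({y | G.edist x y = i} : Set V).ncard : ℝ) ≤ (1 + δ) * r ^ i ∧
      (({y | G.edist x y ≤ i} : Set V).ncard : ℝ) ≤ (1 + 2 * δ) * r ^ i := by
  have hr : 1 ≤ r := by nlinarith
  have hsphere (j : ℕ) : (({y | G.edist x y = j} : Set V).ncard : ℝ) ≤ (1 + δ) * r ^ j := by
    refine le_one_add_mul_pow_of_le_of_le hr hd hdK hrK
      (G.ncard_sphere_le_pow (by positivity) hext x j) ?_
    exact_mod_cast (Set.ncard_le_card _).trans_eq Nat.card_eq_fintype_card
  refine ⟨hsphere i, ?_⟩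
  calc (({y | G.edist x y ≤ i} : Set V).ncard : ℝ)
    _ ≤ ∑ j ∈ range (i + 1), (({y | G.edist x y = j} : Set V).ncard : ℝ) := by
        exact_mod_cast G.ncard_ball_le_sum_ncard_sphere x i
    _ ≤ (1 + 2 * δ) * r ^ i := sum_range_succ_le_of_le_geom hδ hrδ hsphere i

end SimpleGraph

lemma ncard_outerBoundary_erdosRenyiGraph_le {n : ℕ} (ω : Sym2 (Fin n) → Bool)
    (S : Finset (Fin n)) :
    ((erdosRenyiGraph n ω).outerBoundary S).ncard ≤ #{e ∈ crossingPairs S | ω e} :=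
  (erdosRenyiGraph n ω).ncard_outerBoundary_le_card fun a ha b hb hab =>
    mem_filter.2 ⟨mem_crossingPairs.2 ⟨a, ha, b, hb, rfl⟩, hab.2⟩

theorem one_sub_le_measure_ncard_sphere_and_ball_le {n : ℕ} (x : Fin n) {p d δ : ℝ} {K : ℕ}
    (hp0 : 0 ≤ p) (hp : ENNReal.ofReal p ≤ 1) (hn : 3 ≤ n) (hd0 : 0 ≤ d) (hd2 : d ≤ 2)
    (hδ : 0 ≤ δ) (hdK : (1 + d) ^ K ≤ 1 + δ) (hlog : 20 * log n ≤ d ^ 2 * (n * p))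
    (hδr : 1 + 2 * δ ≤ δ * (n * p)) (hnK : (n : ℝ) ≤ (n * p) ^ K) :
    1 - 1 / (n : ENNReal) ^ 3 ≤
      (Measure.pi fun _ : Sym2 (Fin n) =>
          (PMF.bernoulli p.toNNReal (ENNReal.coe_le_one_iff.mp hp)).toMeasure)
        {ω | ∀ i : ℕ,
          (({y | (erdosRenyiGraph n ω).edist x y = i} : Set (Fin n)).ncard : ℝ) ≤
            (1 + δ) * (n * p) ^ i ∧
          (({y | (erdosRenyiGraph n ω).edist x y ≤ i} : Set (Fin n)).ncard : ℝ) ≤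
            (1 + 2 * δ) * (n * p) ^ i} := by
  have hq : (p.toNNReal : ℝ) = p := Real.coe_toNNReal p hp0
  have hbad := measure_exists_card_crossingPairs_gt_le (V := Fin n) p.toNNReal
    (ENNReal.coe_le_one_iff.mp hp) hd0 hd2 (by simpa using hn) (by simpa [hq] using hlog)
  simp only [Fintype.card_fin, hq] at hbad
  refine ((tsub_le_tsub_left hbad 1).trans_eq
    (prob_compl_eq_one_sub (Set.toFinite _).measurableSet).symm).trans
    (measure_mono fun ω hω i => ?_)
  simp only [Set.mem_compl_iff, Set.mem_setOf_eq, not_exists, not_lt] at hω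
  refine (erdosRenyiGraph n ω).ncard_sphere_le_and_ncard_ball_le hd0 hδ hdK hδr
    (by simpa using hnK) (fun S => ?_) x i
  calc _ ≤ (#{e ∈ crossingPairs S | ω e} : ℝ) := by
        exact_mod_cast ncard_outerBoundary_erdosRenyiGraph_le ω S
    _ ≤ _ := (hω S).trans_eq (by ring)

lemma exists_one_add_pow_le (K : ℕ) {δ : ℝ} (hδ : 0 < δ) :
    ∃ d : ℝ, 0 < d ∧ d ≤ 1 ∧ (1 + d) ^ K ≤ 1 + δ := by
  have hlim : Filter.Tendsto (fun d : ℝ => (1 + d) ^ K) (𝓝[>] 0) (𝓝 1) := by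
    have hcont : Continuous fun d : ℝ => (1 + d) ^ K := by fun_prop
    simpa using (hcont.tendsto 0).mono_left nhdsWithin_le_nhds
  obtain ⟨d, hdK, hd1, hd0⟩ := (hlim.eventually (eventually_le_nhds (by linarith : (1 : ℝ) < 1 + δ))
    |>.and <| (eventually_nhdsWithin_of_eventually_nhds (eventually_le_nhds one_pos)).and
      self_mem_nhdsWithin).exists
  exact ⟨d, hd0, hd1, hdK⟩

lemma eventually_edgeProbability_bounds {ε c : ℝ} (hε : ε ∈ Set.Ioo (0 : ℝ) 1) (hc : 0 < c)
    (M : ℝ) {K : ℕ} (hK : 1 ≤ ε * K) :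
    ∀ᶠ n : ℕ in Filter.atTop, c * log n / (n : ℝ) ^ (1 - ε) ≤ 1 ∧
      M * log n ≤ n * (c * log n / (n : ℝ) ^ (1 - ε)) ∧
      (n : ℝ) ≤ (n * (c * log n / (n : ℝ) ^ (1 - ε))) ^ K := by
  obtain ⟨hε0, hε1⟩ := hε
  have hlog : ∀ᶠ n : ℕ in Filter.atTop, c * log n ≤ (n : ℝ) ^ (1 - ε) := by
    filter_upwards [((isLittleO_log_rpow_atTop (sub_pos.2 hε1)).natCast_atTop.def
      (inv_pos.2 hc)), Filter.eventually_ge_atTop 1] with n h hn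
    rw [norm_of_nonneg (log_natCast_nonneg n), norm_of_nonneg (by positivity)] at h
    rwa [← le_div_iff₀' hc, div_eq_inv_mul]
  have hlog1 : ∀ᶠ n : ℕ in Filter.atTop, 1 ≤ c * log n :=
    ((tendsto_log_atTop.const_mul_atTop hc).comp tendsto_natCast_atTop_atTop).eventually_ge_atTop 1
  have hpow : ∀ᶠ n : ℕ in Filter.atTop, M ≤ c * (n : ℝ) ^ ε :=
    (((tendsto_rpow_atTop hε0).const_mul_atTop hc).comp
      tendsto_natCast_atTop_atTop).eventually_ge_atTop M
  filter_upwards [Filter.eventually_gt_atTop 0, hlog, hlog1, hpow] with n hn h1 h2 h3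
  have hn' : (0 : ℝ) < n := by exact_mod_cast hn
  have hnp : (n : ℝ) * (c * log n / (n : ℝ) ^ (1 - ε)) = c * log n * (n : ℝ) ^ ε := by
    rw [rpow_sub hn', rpow_one]; field_simp
  rw [hnp]
  refine ⟨div_le_one_of_le₀ h1 (by positivity), by nlinarith [log_natCast_nonneg n], ?_⟩
  calc (n : ℝ) ≤ (n : ℝ) ^ (ε * K) := self_le_rpow_of_one_le (by exact_mod_cast hn) hK
    _ = ((n : ℝ) ^ ε) ^ K := by rw [rpow_mul hn'.le, rpow_natCast]
    _ ≤ (c * log n * (n : ℝ) ^ ε) ^ K := by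
        gcongr; exact le_mul_of_one_le_left (by positivity) h2

/-- BFS-tree balance (Lemma `BFS-tree-upper-bound`): in `G(n, p)` with
`p = c·(ln n)/n^{1-ε}`, for all sufficiently large `n` and any fixed vertex `x`, with
probability at least `1 - 1/n^3`, for every `i ≥ 1` the distance sphere
`Γ_i(x) = {y : dist(x,y) = i}` has size at most `(1+δ)·(np)^i` and the ball
`N_i(x) = {y : dist(x,y) ≤ i}` has size at most `(1+2δ)·(np)^i`. -/
theorem stmt_14 (ε δ c : ℝ) (hε : ε ∈ Set.Ioo (0 : ℝ) 1) (hδ : 0 < δ) (hc : 0 < c) :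
    ∀ᶠ n : ℕ in Filter.atTop, ∀ x : Fin n,
      ∃ hp : ENNReal.ofReal (c * Real.log n / (n : ℝ) ^ (1 - ε)) ≤ 1,
        1 - 1 / (n : ENNReal) ^ 3 ≤
          (Measure.pi fun _ : Sym2 (Fin n) =>
              (PMF.bernoulli (Real.toNNReal (c * Real.log n / (n : ℝ) ^ (1 - ε)))
                (ENNReal.coe_le_one_iff.mp hp)).toMeasure)
            {ω | ∀ i : ℕ, 1 ≤ i →
              (({y : Fin n | (erdosRenyiGraph n ω).edist x y = (i : ℕ∞)} : Set (Fin n)).ncard : ℝ) ≤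
                (1 + δ) * ((n : ℝ) * (c * Real.log n / (n : ℝ) ^ (1 - ε))) ^ (i : ℝ) ∧
              (({y : Fin n | (erdosRenyiGraph n ω).edist x y ≤ (i : ℕ∞)} : Set (Fin n)).ncard : ℝ) ≤
                (1 + 2 * δ) * ((n : ℝ) * (c * Real.log n / (n : ℝ) ^ (1 - ε))) ^ (i : ℝ)} := by
  obtain ⟨K, hK⟩ : ∃ K : ℕ, 1 ≤ ε * K := by
    obtain ⟨K, hK⟩ := exists_nat_ge ε⁻¹
    exact ⟨K, by rwa [← inv_mul_le_iff₀ hε.1, mul_one]⟩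
  obtain ⟨d, hd0, hd1, hdK⟩ := exists_one_add_pow_le K hδ
  filter_upwards [Filter.eventually_ge_atTop 3,
    (tendsto_log_atTop.comp tendsto_natCast_atTop_atTop).eventually_ge_atTop 1,
    eventually_edgeProbability_bounds hε hc (20 / d ^ 2) hK,
    eventually_edgeProbability_bounds hε hc ((1 + 2 * δ) / δ) hK]
    with n hn hlog1 ⟨hp1, hlog, hnK⟩ ⟨_, hδr, _⟩ x
  set p := c * log n / (n : ℝ) ^ (1 - ε)
  rw [div_mul_eq_mul_div, div_le_iff₀' (by positivity)] at hlog
  have hδr : (1 + 2 * δ) / δ ≤ n * p :=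
    (le_mul_of_one_le_right (by positivity) hlog1).trans hδr
  rw [div_le_iff₀' hδ] at hδr
  have hp := ENNReal.ofReal_le_one.2 hp1
  refine ⟨hp, (one_sub_le_measure_ncard_sphere_and_ball_le x (by positivity) hp hn hd0.le
    (by linarith) hδ.le hdK hlog hδr hnK).trans (measure_mono fun ω hω i _ => ?_)⟩
  simpa only [rpow_natCast] using hω i
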